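/- Define ψ_m^{−1}(r) := 4 / (∫_r^∞ u^{−3/2} e^{−m²u/2} du)² for r > 0 and m > 0. Then ψ_m^{−1} is a C¹, strictly increasing bijection of (0,∞) onto (0,∞) satisfying the ODE r^{−3/2} e^{−m²r/2} = (ψ_m^{−1}(r))^{−3/2} (ψ_m^{−1})'(r) for r > 0, and consequently the pushforward of the measure σ^0(dr) = (2π)^{−1/2} r^{−3/2} dr under ψ_m := (ψ_m^{−1})^{−1} equals σ^m(dr) = (2π)^{−1/2} r^{−3/2} e^{−m²r/2} dr. -/

import Mathlib

open Real Set MeasureTheory Filter Topology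
open scoped ENNReal

/-- The function `ψ_m^{−1}(r) = 4 / (∫_r^∞ u^{−3/2} e^{−m²u/2} du)²`. -/
noncomputable def psiInv (m r : ℝ) : ℝ :=
  4 / (∫ u in Set.Ioi r, u ^ (-(3:ℝ)/2) * Real.exp (-m ^ 2 * u / 2)) ^ 2

/-- The Lévy measure `σ^m(dr) = (2π)^{−1/2} r^{−3/2} e^{−m²r/2} dr` on `(0,∞)`. -/
noncomputable def igLevyMeasure (m : ℝ) : Measure ℝ :=
  (volume.restrict (Set.Ioi (0:ℝ))).withDensity
    (fun r => ENNReal.ofReal ((2 * π) ^ (-(1:ℝ)/2) * r ^ (-(3:ℝ)/2) *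
      Real.exp (-m ^ 2 * r / 2)))

noncomputable def fIG (m u : ℝ) : ℝ := u ^ (-(3:ℝ)/2) * Real.exp (-m ^ 2 * u / 2)

noncomputable def FIG (m r : ℝ) : ℝ := ∫ u in Set.Ioi r, fIG m u

lemma psiInv_eq (m r : ℝ) : psiInv m r = 4 / FIG m r ^ 2 := rfl

lemma psiInv_fun_eq (m : ℝ) : psiInv m = fun r => 4 / FIG m r ^ 2 := rfl

lemma fIG_pos {m u : ℝ} (hu : 0 < u) : 0 < fIG m u :=
  mul_pos (Real.rpow_pos_of_pos hu _) (Real.exp_pos _)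

lemma fIG_contAt {m u : ℝ} (hu : 0 < u) : ContinuousAt (fIG m) u := by
  apply ContinuousAt.mul
  · exact Real.continuousAt_rpow_const _ _ (Or.inl hu.ne')
  · exact (Real.continuous_exp.comp ((continuous_const.mul continuous_id).div_const _)).continuousAt

lemma fIG_le {m u : ℝ} (hu : 0 < u) : fIG m u ≤ u ^ (-(3:ℝ)/2) := by
  have h1 : Real.exp (-m ^ 2 * u / 2) ≤ 1 := by
    rw [Real.exp_le_one_iff]
    have : 0 ≤ m ^ 2 * u := mul_nonneg (sq_nonneg m) hu.le
    linarith
  calc fIG m u ≤ u ^ (-(3:ℝ)/2) * 1 :=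
        mul_le_mul_of_nonneg_left h1 (Real.rpow_nonneg hu.le _)
    _ = u ^ (-(3:ℝ)/2) := mul_one _

lemma fIG_contOn {m : ℝ} : ContinuousOn (fIG m) (Ioi (0:ℝ)) :=
  fun x hx => (fIG_contAt hx).continuousWithinAt

lemma fIG_intOn {m r : ℝ} (hr : 0 < r) : IntegrableOn (fIG m) (Ioi r) := by
  apply Integrable.mono
    (integrableOn_Ioi_rpow_of_lt (show (-(3:ℝ)/2) < -1 by norm_num) hr)
    ((fIG_contOn.mono (Ioi_subset_Ioi hr.le)).aestronglyMeasurable measurableSet_Ioi)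
  rw [ae_restrict_iff' measurableSet_Ioi]
  filter_upwards with u hu
  have hu0 : 0 < u := hr.trans hu
  rw [Real.norm_eq_abs, Real.norm_eq_abs, abs_of_nonneg (fIG_pos hu0).le,
    abs_of_nonneg (Real.rpow_nonneg hu0.le _)]
  exact fIG_le hu0

lemma FIG_split {m a b : ℝ} (ha : 0 < a) (hab : a ≤ b) :
    FIG m a = (∫ u in a..b, fIG m u) + FIG m b := by
  have h1 : IntegrableOn (fIG m) (Ioc a b) := (fIG_intOn ha).mono_set Ioc_subset_Ioi_self
  have h2 : IntegrableOn (fIG m) (Ioi b) := fIG_intOn (lt_of_lt_of_le ha hab)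
  rw [intervalIntegral.integral_of_le hab]
  rw [FIG, FIG, ← setIntegral_union (Ioc_disjoint_Ioi le_rfl) measurableSet_Ioi h1 h2,
    Ioc_union_Ioi_eq_Ioi hab]

lemma FIG_intervalPos {m a b : ℝ} (ha : 0 < a) (hab : a < b) :
    0 < ∫ u in a..b, fIG m u := by
  apply intervalIntegral.intervalIntegral_pos_of_pos_on
  · exact (intervalIntegrable_iff_integrableOn_Ioc_of_le hab.le).2
      ((fIG_intOn ha).mono_set Ioc_subset_Ioi_self)
  · exact fun x hx => fIG_pos (ha.trans hx.1)
  · exact hab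

lemma FIG_nonneg {m r : ℝ} (hr : 0 ≤ r) : 0 ≤ FIG m r :=
  setIntegral_nonneg measurableSet_Ioi fun u hu => (fIG_pos (lt_of_le_of_lt hr hu)).le

lemma FIG_strictAnti {m : ℝ} : StrictAntiOn (FIG m) (Ioi (0:ℝ)) := by
  intro a ha b hb hab
  have := FIG_split (m := m) ha hab.le
  have hpos := FIG_intervalPos (m := m) ha hab
  linarith

lemma FIG_pos {m r : ℝ} (hr : 0 < r) : 0 < FIG m r := by
  have := FIG_split (m := m) hr (le_of_lt (lt_add_one r))
  have h1 := FIG_intervalPos (m := m) hr (lt_add_one r)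
  have h2 : 0 ≤ FIG m (r + 1) := FIG_nonneg (by linarith)
  linarith

lemma FIG_hasDerivAt {m r : ℝ} (hr : 0 < r) : HasDerivAt (FIG m) (-(fIG m r)) r := by
  have ha : 0 < r / 2 := by linarith
  have har : r / 2 < r := by linarith
  have hd : HasDerivAt (fun x => FIG m (r/2) - ∫ u in (r/2)..x, fIG m u) (-(fIG m r)) r := by
    have h1 : HasDerivAt (fun x => ∫ u in (r/2)..x, fIG m u) (fIG m r) r := by
      apply intervalIntegral.integral_hasDerivAt_right
      · exact (intervalIntegrable_iff_integrableOn_Ioc_of_le har.le).2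
          ((fIG_intOn ha).mono_set Ioc_subset_Ioi_self)
      · exact ContinuousOn.stronglyMeasurableAtFilter isOpen_Ioi fIG_contOn r hr
      · exact fIG_contAt hr
    simpa using (h1.const_sub (FIG m (r/2)))
  apply hd.congr_of_eventuallyEq
  filter_upwards [Ioi_mem_nhds har] with x hx
  have := FIG_split (m := m) ha (le_of_lt hx)
  linarith

noncomputable def gdIG (m x : ℝ) : ℝ := 8 * fIG m x / FIG m x ^ 3

lemma gdIG_pos {m r : ℝ} (hr : 0 < r) : 0 < gdIG m r :=
  div_pos (by have := fIG_pos (m := m) (u := r) hr; linarith) (pow_pos (FIG_pos hr) 3)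

lemma psiInv_hasDerivAt {m r : ℝ} (hr : 0 < r) : HasDerivAt (psiInv m) (gdIG m r) r := by
  have hF := FIG_pos (m := m) hr
  have hd := ((FIG_hasDerivAt (m := m) hr).fun_pow 2)
  have h := (hasDerivAt_const r (4:ℝ)).fun_div hd (pow_ne_zero _ hF.ne')
  rw [psiInv_fun_eq]
  refine h.congr_deriv ?_
  have hne : FIG m r ≠ 0 := hF.ne'
  simp only [gdIG]; field_simp
  ring

lemma psiInv_pos {m r : ℝ} (hr : 0 < r) : 0 < psiInv m r := by
  rw [psiInv_eq]
  have := FIG_pos (m := m) hr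
  positivity

lemma psiInv_strictMono {m : ℝ} : StrictMonoOn (psiInv m) (Ioi (0:ℝ)) := by
  intro a ha b hb hab
  rw [psiInv_eq, psiInv_eq]
  have h1 : 0 < FIG m b := FIG_pos hb
  have h2 : FIG m b < FIG m a := FIG_strictAnti ha hb hab
  exact div_lt_div_of_pos_left (by norm_num) (pow_pos h1 2)
    (pow_lt_pow_left₀ h2 h1.le (by norm_num))

lemma psiInv_rpow {m r : ℝ} (hr : 0 < r) :
    psiInv m r ^ (-(3:ℝ)/2) = FIG m r ^ 3 / 8 := by
  have hF := FIG_pos (m := m) hr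
  have ht : (0:ℝ) < 2 / FIG m r := by positivity
  have h1 : psiInv m r = (2 / FIG m r) ^ (2:ℕ) := by
    rw [psiInv_eq, div_pow]; norm_num
  rw [h1, ← Real.rpow_natCast (2 / FIG m r) 2, ← Real.rpow_mul ht.le]
  have h2 : ((2:ℕ):ℝ) * (-(3:ℝ)/2) = ((-3 : ℤ) : ℝ) := by push_cast; ring
  rw [h2, Real.rpow_intCast]
  rw [zpow_neg, zpow_ofNat]
  rw [div_pow]
  rw [inv_div]
  norm_num

lemma psiInv_ode {m r : ℝ} (hr : 0 < r) :
    r ^ (-(3:ℝ)/2) * Real.exp (-m ^ 2 * r / 2) = psiInv m r ^ (-(3:ℝ)/2) * gdIG m r := by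
  have hF := FIG_pos (m := m) hr
  rw [psiInv_rpow hr, gdIG]
  have hne : FIG m r ≠ 0 := hF.ne'
  have : FIG m r ^ 3 / 8 * (8 * fIG m r / FIG m r ^ 3) = fIG m r := by
    field_simp
  rw [this, fIG]

lemma FIG_tendsto_zero {m : ℝ} : Tendsto (FIG m) atTop (𝓝 0) := by
  have hb : Tendsto (fun r : ℝ => -r ^ (-(3:ℝ)/2 + 1) / (-(3:ℝ)/2 + 1)) atTop (𝓝 0) := by
    have h0 : Tendsto (fun r : ℝ => r ^ (-(3:ℝ)/2 + 1)) atTop (𝓝 0) := by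
      have : (-(3:ℝ)/2 + 1) = -(1/2) := by norm_num
      rw [this]
      exact tendsto_rpow_neg_atTop (by norm_num)
    have := (h0.neg).div_const (-(3:ℝ)/2 + 1)
    simpa using this
  apply tendsto_of_tendsto_of_tendsto_of_le_of_le' tendsto_const_nhds hb
  · filter_upwards [eventually_gt_atTop (0:ℝ)] with r hr using FIG_nonneg hr.le
  · filter_upwards [eventually_gt_atTop (0:ℝ)] with r hr
    have h1 : FIG m r ≤ ∫ u in Ioi r, u ^ (-(3:ℝ)/2) := by
      apply setIntegral_mono_on (fIG_intOn hr)
        (integrableOn_Ioi_rpow_of_lt (by norm_num) hr) measurableSet_Ioi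
      exact fun u hu => fIG_le (hr.trans hu)
    rwa [integral_Ioi_rpow_of_lt (by norm_num) hr] at h1

lemma FIG_tendsto_top {m : ℝ} : Tendsto (FIG m) (𝓝[>] (0:ℝ)) atTop := by
  have key : ∀ r ∈ Ioo (0:ℝ) 1,
      Real.exp (-m ^ 2 / 2) * (2 * r ^ (-(1:ℝ)/2) - 2) ≤ FIG m r := by
    intro r hr
    obtain ⟨hr0, hr1⟩ := hr
    have hint1 : IntegrableOn (fun u : ℝ => u ^ (-(3:ℝ)/2)) (Ioc r 1) :=
      (integrableOn_Ioi_rpow_of_lt (by norm_num) hr0).mono_set Ioc_subset_Ioi_self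
    have hint2 : IntegrableOn (fIG m) (Ioc r 1) :=
      (fIG_intOn hr0).mono_set Ioc_subset_Ioi_self
    have step1 : ∫ u in Ioc r 1, fIG m u ≤ FIG m r := by
      apply setIntegral_mono_set (fIG_intOn hr0)
      · rw [EventuallyLE, ae_restrict_iff' measurableSet_Ioi]
        filter_upwards with u hu using (fIG_pos (hr0.trans hu)).le
      · exact (Ioc_subset_Ioi_self : Ioc r 1 ⊆ Ioi r).eventuallyLE
    have step2 : ∫ u in Ioc r 1, Real.exp (-m ^ 2 / 2) * u ^ (-(3:ℝ)/2)
        ≤ ∫ u in Ioc r 1, fIG m u := by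
      apply setIntegral_mono_on (hint1.const_mul _) hint2 measurableSet_Ioc
      intro u hu
      rw [fIG, mul_comm]
      apply mul_le_mul_of_nonneg_left _ (Real.rpow_nonneg (hr0.trans hu.1).le _)
      apply Real.exp_le_exp.2
      have := sq_nonneg m
      nlinarith [hu.2, hu.1, hr0]
    have step3 : ∫ u in Ioc r 1, Real.exp (-m ^ 2 / 2) * u ^ (-(3:ℝ)/2)
        = Real.exp (-m ^ 2 / 2) * (2 * r ^ (-(1:ℝ)/2) - 2) := by
      rw [MeasureTheory.integral_const_mul, ← intervalIntegral.integral_of_le hr1.le]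
      rw [integral_rpow (Or.inr ⟨by norm_num, by
        rw [Set.uIcc_of_le hr1.le]
        exact fun h => absurd h.1 (not_le.2 hr0)⟩)]
      have he : (-(3:ℝ)/2 + 1) = -(1:ℝ)/2 := by norm_num
      rw [he, Real.one_rpow]
      ring
    linarith
  have hlim : Tendsto (fun r : ℝ => Real.exp (-m ^ 2 / 2) * (2 * r ^ (-(1:ℝ)/2) - 2))
      (𝓝[>] (0:ℝ)) atTop := by
    have h0 : Tendsto (fun r : ℝ => r ^ (-(1:ℝ)/2)) (𝓝[>] (0:ℝ)) atTop := by
      have h1 : Tendsto (fun r : ℝ => (r⁻¹) ^ ((1:ℝ)/2)) (𝓝[>] (0:ℝ)) atTop :=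
        (tendsto_rpow_atTop (by norm_num)).comp tendsto_inv_nhdsGT_zero
      apply h1.congr'
      filter_upwards [self_mem_nhdsWithin] with r hr
      rw [← Real.rpow_neg_one r, ← Real.rpow_mul (le_of_lt hr)]
      norm_num
    have h2 : Tendsto (fun r : ℝ => 2 * r ^ (-(1:ℝ)/2) - 2) (𝓝[>] (0:ℝ)) atTop :=
      tendsto_atTop_add_const_right _ (-2) (h0.const_mul_atTop (by norm_num))
    exact h2.const_mul_atTop (Real.exp_pos _)
  apply tendsto_atTop_mono' _ _ hlim
  filter_upwards [Ioo_mem_nhdsGT_of_mem (left_mem_Ico.2 zero_lt_one)] with r hr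
  exact key r hr

lemma psiInv_contOn {m : ℝ} : ContinuousOn (psiInv m) (Ioi (0:ℝ)) :=
  fun x hx => (psiInv_hasDerivAt hx).continuousAt.continuousWithinAt

lemma psiInv_surjOn {m : ℝ} : SurjOn (psiInv m) (Ioi (0:ℝ)) (Ioi (0:ℝ)) := by
  intro y hy
  have hy0 : (0:ℝ) < y := hy
  have hsq : 0 < Real.sqrt y := Real.sqrt_pos.2 hy0
  have hsqy : Real.sqrt y ^ 2 = y := Real.sq_sqrt hy0.le
  -- pick a near 0 with large FIG
  obtain ⟨a, haF, ha0⟩ :=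
    ((FIG_tendsto_top (m := m)).eventually_gt_atTop (2 / Real.sqrt y)).and
      eventually_mem_nhdsWithin |>.exists
  -- pick b large with small FIG
  obtain ⟨b, hbF, hb0⟩ :=
    ((FIG_tendsto_zero (m := m)).eventually_lt_const (by positivity :
        (0:ℝ) < 2 / Real.sqrt y)).and (eventually_gt_atTop 0) |>.exists
  have ha0 : (0:ℝ) < a := ha0
  have hFa := FIG_pos (m := m) ha0
  have hFb := FIG_pos (m := m) hb0
  have hpa : psiInv m a < y := by
    rw [psiInv_eq, div_lt_iff₀ (pow_pos hFa 2)]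
    have h2 : 2 < FIG m a * Real.sqrt y := by
      rw [div_lt_iff₀ hsq] at haF; linarith
    have h3 : y * FIG m a ^ 2 = (FIG m a * Real.sqrt y) ^ 2 := by
      rw [mul_pow, hsqy]; ring
    nlinarith [mul_pos (by linarith : (0:ℝ) < FIG m a * Real.sqrt y - 2)
      (by linarith : (0:ℝ) < FIG m a * Real.sqrt y + 2)]
  have hpb : y < psiInv m b := by
    rw [psiInv_eq, lt_div_iff₀ (pow_pos hFb 2)]
    have h2 : FIG m b * Real.sqrt y < 2 := by
      rw [lt_div_iff₀ hsq] at hbF; linarith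
    have h2' : 0 < FIG m b * Real.sqrt y := mul_pos hFb hsq
    have h3 : y * FIG m b ^ 2 = (FIG m b * Real.sqrt y) ^ 2 := by
      rw [mul_pow, hsqy]; ring
    nlinarith [mul_pos (by linarith : (0:ℝ) < 2 - FIG m b * Real.sqrt y)
      (by linarith : (0:ℝ) < 2 + FIG m b * Real.sqrt y)]
  have hab : a < b := by
    by_contra h
    push_neg at h
    have := (psiInv_strictMono (m := m)).monotoneOn (mem_Ioi.2 hb0) (mem_Ioi.2 ha0) h
    linarith
  have hsub : Icc a b ⊆ Ioi (0:ℝ) := fun x hx => lt_of_lt_of_le ha0 hx.1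
  obtain ⟨x, hx, hxy⟩ := intermediate_value_Icc hab.le (psiInv_contOn.mono hsub)
    ⟨hpa.le, hpb.le⟩
  exact ⟨x, hsub hx, hxy⟩

lemma psiInv_bijOn {m : ℝ} : BijOn (psiInv m) (Ioi (0:ℝ)) (Ioi (0:ℝ)) :=
  ⟨fun x hx => mem_Ioi.2 (psiInv_pos hx), psiInv_strictMono.injOn, psiInv_surjOn⟩

lemma gdIG_contOn {m : ℝ} : ContinuousOn (gdIG m) (Ioi (0:ℝ)) := by
  have hF : ContinuousOn (FIG m) (Ioi (0:ℝ)) :=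
    fun x hx => (FIG_hasDerivAt hx).continuousAt.continuousWithinAt
  have hf : ContinuousOn (fIG m) (Ioi (0:ℝ)) :=
    fun x hx => (fIG_contAt hx).continuousWithinAt
  exact (continuousOn_const.mul hf).div (hF.pow 3)
    (fun x hx => pow_ne_zero _ (FIG_pos hx).ne')

lemma psiInv_contDiffOn {m : ℝ} : ContDiffOn ℝ 1 (psiInv m) (Ioi (0:ℝ)) := by
  rw [← zero_add (1 : WithTop ℕ∞), contDiffOn_succ_iff_deriv_of_isOpen isOpen_Ioi]
  refine ⟨fun x hx => (psiInv_hasDerivAt hx).differentiableAt.differentiableWithinAt,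
    by simp, ?_⟩
  rw [contDiffOn_zero]
  exact gdIG_contOn.congr fun x hx => (psiInv_hasDerivAt hx).deriv

/-- The inverse function. -/
noncomputable def psiIG (m : ℝ) : ℝ → ℝ := Function.invFunOn (psiInv m) (Ioi 0)

lemma psiIG_invOn {m : ℝ} : InvOn (psiIG m) (psiInv m) (Ioi (0:ℝ)) (Ioi (0:ℝ)) :=
  psiInv_bijOn.invOn_invFunOn

lemma psiIG_mem {m y : ℝ} (hy : y ∈ Ioi (0:ℝ)) : psiIG m y ∈ Ioi (0:ℝ) :=
  Function.invFunOn_mem ((Set.mem_image _ _ _).1 (psiInv_bijOn.surjOn hy))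

lemma psiIG_right {m y : ℝ} (hy : y ∈ Ioi (0:ℝ)) : psiInv m (psiIG m y) = y :=
  psiIG_invOn.2 hy

lemma psiIG_const {m : ℝ} {y : ℝ} (hy : y ≤ 0) : psiIG m y = psiIG m 0 := by
  have h : ∀ z : ℝ, z ≤ 0 → ¬ ∃ x, x ∈ Ioi (0:ℝ) ∧ psiInv m x = z := by
    rintro z hz ⟨x, hx, he⟩
    exact absurd (he ▸ psiInv_pos hx) (not_lt.2 hz)
  simp only [psiIG, Function.invFunOn, dif_neg (h y hy), dif_neg (h 0 le_rfl)]

lemma psiIG_mono {m : ℝ} : MonotoneOn (psiIG m) (Ioi (0:ℝ)) := by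
  intro y1 hy1 y2 hy2 h12
  by_contra hlt
  push_neg at hlt
  have := psiInv_strictMono (m := m) (psiIG_mem hy2) (psiIG_mem hy1) hlt
  rw [psiIG_right hy1, psiIG_right hy2] at this
  exact absurd h12 (not_le.2 this)

lemma psiIG_meas {m : ℝ} : Measurable (psiIG m) := by
  apply measurable_of_Iio
  intro t
  have hcover : psiIG m ⁻¹' Iio t
      = (Iic (0:ℝ) ∩ psiIG m ⁻¹' Iio t) ∪ (Ioi (0:ℝ) ∩ psiIG m ⁻¹' Iio t) := by
    rw [← Set.union_inter_distrib_right, Set.Iic_union_Ioi, Set.univ_inter]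
  rw [hcover]
  apply MeasurableSet.union
  · have : Iic (0:ℝ) ∩ psiIG m ⁻¹' Iio t
        = if psiIG m 0 < t then Iic (0:ℝ) else (∅ : Set ℝ) := by
      split_ifs with h
      · ext y
        refine ⟨fun hy => hy.1, fun hy => ⟨hy, ?_⟩⟩
        simp only [Set.mem_preimage, Set.mem_Iio]
        rw [psiIG_const hy]
        exact h
      · ext y
        simp only [Set.mem_inter_iff, Set.mem_preimage, Set.mem_Iio, Set.mem_Iic,
          Set.mem_empty_iff_false, iff_false, not_and]
        intro hy hlt
        rw [psiIG_const hy] at hlt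
        exact h hlt
    rw [this]
    split_ifs
    · exact measurableSet_Iic
    · exact MeasurableSet.empty
  · refine Set.OrdConnected.measurableSet ⟨?_⟩
    rintro x ⟨hx0, hxt⟩ z ⟨hz0, hzt⟩ y hy
    have hy0 : y ∈ Ioi (0:ℝ) := lt_of_lt_of_le hx0 hy.1
    refine ⟨hy0, ?_⟩
    simp only [Set.mem_preimage, Set.mem_Iio] at hzt ⊢
    exact lt_of_le_of_lt (psiIG_mono hy0 hz0 hy.2) hzt

lemma psiIG_preimage {m : ℝ} (A : Set ℝ) :
    psiIG m ⁻¹' A ∩ Ioi 0 = psiInv m '' (A ∩ Ioi 0) := by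
  ext x
  constructor
  · rintro ⟨hxA, hx0⟩
    exact ⟨psiIG m x, ⟨hxA, psiIG_mem hx0⟩, psiIG_right hx0⟩
  · rintro ⟨y, ⟨hyA, hy0⟩, rfl⟩
    refine ⟨?_, psiInv_bijOn.mapsTo hy0⟩
    show psiIG m (psiInv m y) ∈ A
    rw [psiIG_invOn.1 hy0]
    exact hyA

lemma lintegral_image_1d {s : Set ℝ} {f f' : ℝ → ℝ} (hs : MeasurableSet s)
    (hf' : ∀ x ∈ s, HasDerivWithinAt f (f' x) s x) (hf : InjOn f s) (g : ℝ → ℝ≥0∞) :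
    ∫⁻ x in f '' s, g x = ∫⁻ x in s, ENNReal.ofReal |f' x| * g (f x) := by
  simpa only [ContinuousLinearMap.det_toSpanSingleton] using
    lintegral_image_eq_lintegral_abs_det_fderiv_mul volume hs
      (fun x hx => (hf' x hx).hasFDerivWithinAt) hf g

lemma psiIG_map {m : ℝ} : Measure.map (psiIG m) (igLevyMeasure 0) = igLevyMeasure m := by
  ext A hA
  rw [Measure.map_apply psiIG_meas hA]
  unfold igLevyMeasure
  rw [withDensity_apply _ (psiIG_meas hA), withDensity_apply _ hA,
    Measure.restrict_restrict (psiIG_meas hA), Measure.restrict_restrict hA,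
    psiIG_preimage A]
  rw [lintegral_image_1d (hA.inter measurableSet_Ioi)
    (fun x hx => (psiInv_hasDerivAt hx.2).hasDerivWithinAt)
    (psiInv_strictMono.injOn.mono inter_subset_right)]
  apply setLIntegral_congr_fun (hA.inter measurableSet_Ioi)
  rintro x ⟨-, hx0⟩
  have hx0 : (0:ℝ) < x := hx0
  dsimp only
  rw [abs_of_pos (gdIG_pos hx0), ← ENNReal.ofReal_mul (gdIG_pos hx0).le]
  congr 1
  have hode := psiInv_ode (m := m) hx0
  have hexp : Real.exp (-(0:ℝ) ^ 2 * psiInv m x / 2) = 1 := by norm_num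
  rw [hexp, mul_one]
  calc gdIG m x * ((2 * π) ^ (-(1:ℝ)/2) * psiInv m x ^ (-(3:ℝ)/2))
      = (2 * π) ^ (-(1:ℝ)/2) * (psiInv m x ^ (-(3:ℝ)/2) * gdIG m x) := by ring
    _ = (2 * π) ^ (-(1:ℝ)/2) * (x ^ (-(3:ℝ)/2) * Real.exp (-m ^ 2 * x / 2)) := by
        rw [← hode]
    _ = (2 * π) ^ (-(1:ℝ)/2) * x ^ (-(3:ℝ)/2) * Real.exp (-m ^ 2 * x / 2) := by ring

/-- `ψ_m^{−1}` is a C¹ strictly increasing bijection of `(0,∞)` onto itself, satisfies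
the stated ODE, and the pushforward of `σ^0` under `ψ_m = (ψ_m^{−1})^{−1}` is `σ^m`. -/
theorem stmt10 (m : ℝ) (hm : 0 < m) :
    StrictMonoOn (psiInv m) (Set.Ioi (0:ℝ)) ∧
    Set.BijOn (psiInv m) (Set.Ioi (0:ℝ)) (Set.Ioi (0:ℝ)) ∧
    ContDiffOn ℝ 1 (psiInv m) (Set.Ioi (0:ℝ)) ∧
    (∀ r : ℝ, 0 < r → ∃ g' : ℝ,
      HasDerivAt (psiInv m) g' r ∧
      r ^ (-(3:ℝ)/2) * Real.exp (-m ^ 2 * r / 2) = (psiInv m r) ^ (-(3:ℝ)/2) * g') ∧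
    ∃ ψ : ℝ → ℝ, Set.InvOn ψ (psiInv m) (Set.Ioi (0:ℝ)) (Set.Ioi (0:ℝ)) ∧
      Measure.map ψ (igLevyMeasure 0) = igLevyMeasure m := by
  exact ⟨psiInv_strictMono, psiInv_bijOn, psiInv_contDiffOn,
    fun r hr => ⟨gdIG m r, psiInv_hasDerivAt hr, psiInv_ode hr⟩,
    psiIG m, psiIG_invOn, psiIG_map⟩
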